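/- arXiv:1301.4136 — 3 statements merged into one kernel-verified Lean document; each statement's English description precedes it below -/
import Mathlib

section
/- Let X = (x1, …, xn) ∈ (ℤ/12ℤ)ⁿ have n distinct entries, let G ≤ Aff*(ℤ/12ℤ) act componentwise with f{x1, …, xn} ≠ {x1, …, xn} for all f ∈ G with f ≠ id, and let Σn act by coordinate permutation. On the orbit ΣnGX define ρ(νh)(σg·X) := σg(νh)⁻¹·X for ν, σ ∈ Σn and h, g ∈ G. Then the group ρ(ΣnG) ≤ Sym(ΣnGX) is the internal direct product of its subgroups ρ(Σn) and ρ(G). -/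
/-- The coordinate-permuting action of `Σn` on `n`-tuples in `ℤ/12ℤ`. -/
def pact {n : ℕ} (σ : Equiv.Perm (Fin n)) (y : Fin n → ZMod 12) : Fin n → ZMod 12 :=
  fun i => y (σ⁻¹ i)

/-- The componentwise action of a bijection of `ℤ/12ℤ` on `n`-tuples. -/
def gact {n : ℕ} (f : Equiv.Perm (ZMod 12)) (y : Fin n → ZMod 12) : Fin n → ZMod 12 :=
  fun i => f (y i)

/-- The orbit `ΣnGX` of `X` under coordinate permutations and the componentwise
action of `G`. -/
def bigOrbit {n : ℕ} (X : Fin n → ZMod 12) (G : Subgroup (Equiv.Perm (ZMod 12))) :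
    Set (Fin n → ZMod 12) :=
  {W | ∃ σ : Equiv.Perm (Fin n), ∃ f ∈ G, pact σ (gact f X) = W}

/-
The defining formula `ρ(νh)(σf·X) = σf(νh)⁻¹·X` shows at once that `ρ` is multiplicative on
`Σn × G` and that `ρ(1·1) = 1`; as `Σn` and `G` commute, `ρ(ν·1) ρ(1·h) = ρ(νh) = ρ(1·h) ρ(ν·1)`.
If `ρ(ν·1) = ρ(1·h)`, evaluating both at `X` gives `ν⁻¹·X = h⁻¹·X`, so `h⁻¹` maps the set of
entries of `X` onto itself; the hypothesis on `G` forces `h = 1`, and then `ν⁻¹·X = X` forces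
`ν = 1` because the entries of `X` are distinct.
-/

@[simp]
lemma pact_one {n : ℕ} (y : Fin n → ZMod 12) : pact 1 y = y := rfl

@[simp]
lemma gact_one {n : ℕ} (y : Fin n → ZMod 12) : gact 1 y = y := rfl

lemma range_pact {n : ℕ} (σ : Equiv.Perm (Fin n)) (y : Fin n → ZMod 12) :
    Set.range (pact σ y) = Set.range y :=
  (σ⁻¹).surjective.range_comp y

lemma range_gact {n : ℕ} (f : Equiv.Perm (ZMod 12)) (y : Fin n → ZMod 12) :
    Set.range (gact f y) = ⇑f '' Set.range y :=
  Set.range_comp f y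

lemma image_range_eq_of_pact_eq_gact {n : ℕ} {X : Fin n → ZMod 12} {ν : Equiv.Perm (Fin n)}
    {f : Equiv.Perm (ZMod 12)} (h : pact ν X = gact f X) : ⇑f '' Set.range X = Set.range X := by
  rw [← range_gact, ← h, range_pact]

lemma eq_one_of_pact_eq_self {n : ℕ} {X : Fin n → ZMod 12} (hX : Function.Injective X)
    {ν : Equiv.Perm (Fin n)} (h : pact ν X = X) : ν = 1 := by
  suffices ν⁻¹ = 1 from inv_eq_one.mp this
  ext i
  exact congrArg Fin.val (hX (congrFun h i))

/-- The defining property of the dual operation `ρ(νh)(σf·X) = σf(νh)⁻¹·X` on `ΣnGX`. -/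
def IsDualAction {n : ℕ} (X : Fin n → ZMod 12) (G : Subgroup (Equiv.Perm (ZMod 12)))
    (ρ : Equiv.Perm (Fin n) → Equiv.Perm (ZMod 12) → Equiv.Perm ↥(bigOrbit X G)) : Prop :=
  ∀ (ν : Equiv.Perm (Fin n)) (h : Equiv.Perm (ZMod 12)), h ∈ G →
    ∀ (σ : Equiv.Perm (Fin n)) (f : Equiv.Perm (ZMod 12)), f ∈ G →
    ∀ Y : ↥(bigOrbit X G), (Y : Fin n → ZMod 12) = pact σ (gact f X) →
      ((ρ ν h Y : Fin n → ZMod 12) = pact (σ * ν⁻¹) (gact (f * h⁻¹) X))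

namespace IsDualAction

variable {n : ℕ} {X : Fin n → ZMod 12} {G : Subgroup (Equiv.Perm (ZMod 12))}
  {ρ : Equiv.Perm (Fin n) → Equiv.Perm (ZMod 12) → Equiv.Perm ↥(bigOrbit X G)}

lemma mul (hρ : IsDualAction X G ρ) (ν ν' : Equiv.Perm (Fin n)) {h h' : Equiv.Perm (ZMod 12)}
    (hh : h ∈ G) (hh' : h' ∈ G) : ρ ν h * ρ ν' h' = ρ (ν * ν') (h * h') := by
  ext1 Y
  obtain ⟨σ, f, hf, hY⟩ := Y.2
  have h₁ := hρ ν' h' hh' σ f hf Y hY.symm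
  have h₂ := hρ ν h hh _ _ (G.mul_mem hf (G.inv_mem hh')) _ h₁
  apply Subtype.ext
  rw [Equiv.Perm.mul_apply, h₂, hρ (ν * ν') (h * h') (G.mul_mem hh hh') σ f hf Y hY.symm]
  simp only [mul_inv_rev, mul_assoc]

lemma one (hρ : IsDualAction X G ρ) : ρ 1 1 = 1 := by
  ext1 Y
  obtain ⟨σ, f, hf, hY⟩ := Y.2
  apply Subtype.ext
  simpa [hY] using hρ 1 1 G.one_mem σ f hf Y hY.symm

lemma apply_base (hρ : IsDualAction X G ρ) (ν : Equiv.Perm (Fin n)) {h : Equiv.Perm (ZMod 12)}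
    (hh : h ∈ G) (hX : X ∈ bigOrbit X G) :
    (ρ ν h ⟨X, hX⟩ : Fin n → ZMod 12) = pact ν⁻¹ (gact h⁻¹ X) := by
  simpa using hρ ν h hh 1 1 G.one_mem ⟨X, hX⟩ rfl

lemma eq_one_of_left_eq_right (hρ : IsDualAction X G ρ) (hX : Function.Injective X)
    (hGsym : ∀ f ∈ G, f ≠ 1 → (⇑f) '' Set.range X ≠ Set.range X)
    {ν : Equiv.Perm (Fin n)} {h : Equiv.Perm (ZMod 12)} (hh : h ∈ G) (heq : ρ ν 1 = ρ 1 h) :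
    ν = 1 ∧ h = 1 := by
  have hXmem : X ∈ bigOrbit X G := ⟨1, 1, G.one_mem, rfl⟩
  have hbase : pact ν⁻¹ X = gact h⁻¹ X := by
    simpa [hρ.apply_base ν G.one_mem, hρ.apply_base 1 hh] using
      congrArg (fun p => (p ⟨X, hXmem⟩ : Fin n → ZMod 12)) heq
  have hh₁ : h = 1 := by
    by_contra hne
    exact hGsym h⁻¹ (G.inv_mem hh) (inv_ne_one.mpr hne) (image_range_eq_of_pact_eq_gact hbase)
  subst hh₁
  exact ⟨inv_eq_one.mp (eq_one_of_pact_eq_self hX hbase), rfl⟩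

end IsDualAction

theorem stmt14_general {n : ℕ} (X : Fin n → ZMod 12) (hX : Function.Injective X)
    (G : Subgroup (Equiv.Perm (ZMod 12)))
    (hGsym : ∀ f ∈ G, f ≠ 1 → (⇑f) '' Set.range X ≠ Set.range X)
    (ρ : Equiv.Perm (Fin n) → Equiv.Perm (ZMod 12) → Equiv.Perm ↥(bigOrbit X G))
    (hρ : ∀ (ν : Equiv.Perm (Fin n)) (h : Equiv.Perm (ZMod 12)), h ∈ G →
      ∀ (σ : Equiv.Perm (Fin n)) (f : Equiv.Perm (ZMod 12)), f ∈ G →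
      ∀ Y : ↥(bigOrbit X G), (Y : Fin n → ZMod 12) = pact σ (gact f X) →
        ((ρ ν h Y : Fin n → ZMod 12) = pact (σ * ν⁻¹) (gact (f * h⁻¹) X))) :
    (∀ p ∈ {p : Equiv.Perm ↥(bigOrbit X G) | ∃ ν : Equiv.Perm (Fin n), p = ρ ν 1},
      ∀ q ∈ {p : Equiv.Perm ↥(bigOrbit X G) | ∃ h ∈ G, p = ρ 1 h},
        p * q = q * p) ∧
    ({p : Equiv.Perm ↥(bigOrbit X G) | ∃ ν : Equiv.Perm (Fin n), p = ρ ν 1} ∩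
      {p : Equiv.Perm ↥(bigOrbit X G) | ∃ h ∈ G, p = ρ 1 h} = {1}) ∧
    (∀ p ∈ {p : Equiv.Perm ↥(bigOrbit X G) | ∃ ν : Equiv.Perm (Fin n), ∃ h ∈ G, p = ρ ν h},
      ∃ a ∈ {p : Equiv.Perm ↥(bigOrbit X G) | ∃ ν : Equiv.Perm (Fin n), p = ρ ν 1},
        ∃ b ∈ {p : Equiv.Perm ↥(bigOrbit X G) | ∃ h ∈ G, p = ρ 1 h},
          p = a * b) := by
  have hρ : IsDualAction X G ρ := hρ
  refine ⟨?_, ?_, ?_⟩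
  · rintro _ ⟨ν, rfl⟩ _ ⟨h, hh, rfl⟩
    rw [hρ.mul ν 1 G.one_mem hh, hρ.mul 1 ν hh G.one_mem, mul_one, one_mul, mul_one, one_mul]
  · ext p
    constructor
    · rintro ⟨⟨ν, rfl⟩, h, hh, heq⟩
      obtain ⟨rfl, -⟩ := hρ.eq_one_of_left_eq_right hX hGsym hh heq
      exact hρ.one
    · rintro rfl
      exact ⟨⟨1, hρ.one.symm⟩, 1, G.one_mem, hρ.one.symm⟩
  · rintro _ ⟨ν, h, hh, rfl⟩
    refine ⟨ρ ν 1, ⟨ν, rfl⟩, ρ 1 h, ⟨h, hh, rfl⟩, ?_⟩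
    rw [hρ.mul ν 1 G.one_mem hh, mul_one, one_mul]

/-- With `ρ(νh)` the dual operation on the orbit `ΣnGX` characterized by
`ρ(νh)(σg·X) = σg(νh)⁻¹·X`, the group `ρ(ΣnG) = {ρ(νh) : ν ∈ Σn, h ∈ G}` is the internal
direct product of `ρ(Σn) = {ρ(ν·1)}` and `ρ(G) = {ρ(1·h) : h ∈ G}`: these commute
elementwise, intersect trivially, and every element of `ρ(ΣnG)` is a product of one
element of each. -/
theorem stmt14 {n : ℕ} (X : Fin n → ZMod 12) (hX : Function.Injective X)
    (G : Subgroup (Equiv.Perm (ZMod 12)))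
    (hGaff : ∀ f ∈ G, ∃ a b : ZMod 12, IsUnit a ∧ ∀ x : ZMod 12, f x = a * x + b)
    (hGsym : ∀ f ∈ G, f ≠ 1 → (⇑f) '' Set.range X ≠ Set.range X)
    (ρ : Equiv.Perm (Fin n) → Equiv.Perm (ZMod 12) → Equiv.Perm ↥(bigOrbit X G))
    (hρ : ∀ (ν : Equiv.Perm (Fin n)) (h : Equiv.Perm (ZMod 12)), h ∈ G →
      ∀ (σ : Equiv.Perm (Fin n)) (f : Equiv.Perm (ZMod 12)), f ∈ G →
      ∀ Y : ↥(bigOrbit X G), (Y : Fin n → ZMod 12) = pact σ (gact f X) →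
        ((ρ ν h Y : Fin n → ZMod 12) = pact (σ * ν⁻¹) (gact (f * h⁻¹) X))) :
    (∀ p ∈ {p : Equiv.Perm ↥(bigOrbit X G) | ∃ ν : Equiv.Perm (Fin n), p = ρ ν 1},
      ∀ q ∈ {p : Equiv.Perm ↥(bigOrbit X G) | ∃ h ∈ G, p = ρ 1 h},
        p * q = q * p) ∧
    ({p : Equiv.Perm ↥(bigOrbit X G) | ∃ ν : Equiv.Perm (Fin n), p = ρ ν 1} ∩
      {p : Equiv.Perm ↥(bigOrbit X G) | ∃ h ∈ G, p = ρ 1 h} = {1}) ∧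
    (∀ p ∈ {p : Equiv.Perm ↥(bigOrbit X G) | ∃ ν : Equiv.Perm (Fin n), ∃ h ∈ G, p = ρ ν h},
      ∃ a ∈ {p : Equiv.Perm ↥(bigOrbit X G) | ∃ ν : Equiv.Perm (Fin n), p = ρ ν 1},
        ∃ b ∈ {p : Equiv.Perm ↥(bigOrbit X G) | ∃ h ∈ G, p = ρ 1 h},
          p = a * b) :=
  stmt14_general X hX G hGsym ρ hρ
end

section
/- Let X = (x1, …, xn) ∈ (ℤ/12ℤ)ⁿ have n distinct entries, let G ≤ Aff*(ℤ/12ℤ) act componentwise with f{x1, …, xn} ≠ {x1, …, xn} for all f ∈ G with f ≠ id, and let Σn act by coordinate permutation. Let λ(ΣnG) ≤ Sym(ΣnGX) be the image of the action of the internal direct product ΣnG on the orbit ΣnGX, and let ρ(ΣnG) be defined by ρ(νh)(σg·X) := σg(νh)⁻¹·X. Then λ(ΣnG) and ρ(ΣnG) are dual groups in Sym(ΣnGX): both act simply transitively on ΣnGX and each is the centralizer of the other. -/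
/-! `λ` and `ρ` are the left and right translations of `ΣnG` transported to its orbit, so
their images are transitive and commute elementwise. If `T` is transitive, an element `p` of
its centralizer is determined by its value at a single point `y`: writing `x = t y` with
`t ∈ T`, we get `p x = t (p y)`. Hence each of two commuting transitive sets of permutations
acts simply transitively, and fills the centralizer of the other. -/

namespace Equiv.Perm

variable {α : Type*}

def IsTransitive (S : Set (Perm α)) : Prop :=
  ∀ y z : α, ∃ p ∈ S, p y = z

def IsSimplyTransitive (S : Set (Perm α)) : Prop :=
  ∀ y z : α, ∃! p : Perm α, p ∈ S ∧ p y = z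

def IsLewinDual (S T : Set (Perm α)) : Prop :=
  IsSimplyTransitive S ∧ IsSimplyTransitive T ∧
    (Subgroup.centralizer S : Set (Perm α)) = T ∧ (Subgroup.centralizer T : Set (Perm α)) = S

theorem eq_of_apply_eq_of_mem_centralizer {T : Set (Perm α)} (hT : IsTransitive T)
    {p q : Perm α} (hp : p ∈ Subgroup.centralizer T) (hq : q ∈ Subgroup.centralizer T)
    {y : α} (h : p y = q y) : p = q := by
  ext x
  obtain ⟨t, ht, rfl⟩ := hT y x
  calc p (t y) = t (p y) := (DFunLike.congr_fun (hp t ht) y).symm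
    _ = t (q y) := by rw [h]
    _ = q (t y) := DFunLike.congr_fun (hq t ht) y

theorem IsTransitive.isSimplyTransitive {S T : Set (Perm α)} (hS : IsTransitive S)
    (hT : IsTransitive T) (hST : S ⊆ Subgroup.centralizer T) : IsSimplyTransitive S := by
  intro y z
  obtain ⟨p, hp, hpy⟩ := hS y z
  refine ⟨p, ⟨hp, hpy⟩, fun q ⟨hq, hqy⟩ => ?_⟩
  exact eq_of_apply_eq_of_mem_centralizer hT (hST hq) (hST hp) (hqy.trans hpy.symm)

theorem IsTransitive.centralizer_eq [Nonempty α] {S T : Set (Perm α)} (hS : IsTransitive S)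
    (hT : IsTransitive T) (hTS : T ⊆ Subgroup.centralizer S) :
    (Subgroup.centralizer S : Set (Perm α)) = T := by
  refine Set.Subset.antisymm (fun p hp => ?_) hTS
  obtain ⟨y⟩ := ‹Nonempty α›
  obtain ⟨t, ht, hty⟩ := hT y (p y)
  rwa [eq_of_apply_eq_of_mem_centralizer hS hp (hTS ht) hty.symm]

theorem IsTransitive.isLewinDual [Nonempty α] {S T : Set (Perm α)} (hS : IsTransitive S)
    (hT : IsTransitive T) (hST : ∀ s ∈ S, ∀ t ∈ T, Commute s t) : IsLewinDual S T := by
  have hS_sub : S ⊆ Subgroup.centralizer T := fun s hs t ht => (hST s hs t ht).eq.symm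
  have hT_sub : T ⊆ Subgroup.centralizer S := fun t ht s hs => (hST s hs t ht).eq
  exact ⟨hS.isSimplyTransitive hT hS_sub, hT.isSimplyTransitive hS hT_sub,
    hS.centralizer_eq hT hT_sub, hT.centralizer_eq hS hS_sub⟩

section Translations

variable {H : Type*} [Group H] {e : H → α} {L R : H → Perm α}

theorem isTransitive_range_of_left (he : Function.Surjective e)
    (hL : ∀ a b, L a (e b) = e (a * b)) : IsTransitive (Set.range L) := by
  intro y z
  obtain ⟨b, rfl⟩ := he y
  obtain ⟨c, rfl⟩ := he z
  exact ⟨L (c * b⁻¹), ⟨_, rfl⟩, by rw [hL, inv_mul_cancel_right]⟩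

theorem isTransitive_range_of_right (he : Function.Surjective e)
    (hR : ∀ a b, R a (e b) = e (b * a⁻¹)) : IsTransitive (Set.range R) := by
  intro y z
  obtain ⟨b, rfl⟩ := he y
  obtain ⟨c, rfl⟩ := he z
  exact ⟨R (c⁻¹ * b), ⟨_, rfl⟩, by rw [hR, mul_inv_rev, inv_inv, mul_inv_cancel_left]⟩

theorem commute_of_left_of_right (he : Function.Surjective e)
    (hL : ∀ a b, L a (e b) = e (a * b)) (hR : ∀ a b, R a (e b) = e (b * a⁻¹)) (a b : H) :
    Commute (L a) (R b) := by
  ext1 y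
  obtain ⟨c, rfl⟩ := he y
  simp only [Perm.mul_apply, hL, hR, mul_assoc]

theorem isLewinDual_range_of_left_of_right (he : Function.Surjective e)
    (hL : ∀ a b, L a (e b) = e (a * b)) (hR : ∀ a b, R a (e b) = e (b * a⁻¹)) :
    IsLewinDual (Set.range L) (Set.range R) := by
  have : Nonempty α := ⟨e 1⟩
  refine (isTransitive_range_of_left he hL).isLewinDual (isTransitive_range_of_right he hR) ?_
  rintro _ ⟨a, rfl⟩ _ ⟨b, rfl⟩
  exact commute_of_left_of_right he hL hR a b

end Translations

end Equiv.Perm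

theorem setOf_exists_mem_eq_range {A B C S : Type*} [SetLike S B] (F : A → B → C) (s : S) :
    {c | ∃ a, ∃ b ∈ s, c = F a b} = Set.range fun x : A × s => F x.1 x.2 := by
  ext c
  constructor
  · rintro ⟨a, b, hb, rfl⟩
    exact ⟨(a, ⟨b, hb⟩), rfl⟩
  · rintro ⟨⟨a, b, hb⟩, rfl⟩
    exact ⟨a, b, hb, rfl⟩

theorem stmt16_general {n : ℕ} (X : Fin n → ZMod 12)
    (G : Subgroup (Equiv.Perm (ZMod 12)))
    (lam ρ : Equiv.Perm (Fin n) → Equiv.Perm (ZMod 12) → Equiv.Perm ↥(bigOrbit X G))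
    (hlam : ∀ (ν : Equiv.Perm (Fin n)) (h : Equiv.Perm (ZMod 12)), h ∈ G →
      ∀ (σ : Equiv.Perm (Fin n)) (f : Equiv.Perm (ZMod 12)), f ∈ G →
      ∀ Y : ↥(bigOrbit X G), (Y : Fin n → ZMod 12) = pact σ (gact f X) →
        ((lam ν h Y : Fin n → ZMod 12) = pact (ν * σ) (gact (h * f) X)))
    (hρ : ∀ (ν : Equiv.Perm (Fin n)) (h : Equiv.Perm (ZMod 12)), h ∈ G →
      ∀ (σ : Equiv.Perm (Fin n)) (f : Equiv.Perm (ZMod 12)), f ∈ G →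
      ∀ Y : ↥(bigOrbit X G), (Y : Fin n → ZMod 12) = pact σ (gact f X) →
        ((ρ ν h Y : Fin n → ZMod 12) = pact (σ * ν⁻¹) (gact (f * h⁻¹) X))) :
    (∀ Y Z : ↥(bigOrbit X G), ∃! p : Equiv.Perm ↥(bigOrbit X G),
        p ∈ {p | ∃ ν : Equiv.Perm (Fin n), ∃ h ∈ G, p = lam ν h} ∧ p Y = Z) ∧
    (∀ Y Z : ↥(bigOrbit X G), ∃! p : Equiv.Perm ↥(bigOrbit X G),
        p ∈ {p | ∃ ν : Equiv.Perm (Fin n), ∃ h ∈ G, p = ρ ν h} ∧ p Y = Z) ∧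
    ((Subgroup.centralizer {p : Equiv.Perm ↥(bigOrbit X G) |
          ∃ ν : Equiv.Perm (Fin n), ∃ h ∈ G, p = lam ν h} : Set (Equiv.Perm ↥(bigOrbit X G)))
        = {p | ∃ ν : Equiv.Perm (Fin n), ∃ h ∈ G, p = ρ ν h}) ∧
    ((Subgroup.centralizer {p : Equiv.Perm ↥(bigOrbit X G) |
          ∃ ν : Equiv.Perm (Fin n), ∃ h ∈ G, p = ρ ν h} : Set (Equiv.Perm ↥(bigOrbit X G)))
        = {p | ∃ ν : Equiv.Perm (Fin n), ∃ h ∈ G, p = lam ν h}) := by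
  let e : Equiv.Perm (Fin n) × G → bigOrbit X G := fun a =>
    ⟨pact a.1 (gact a.2 X), a.1, a.2, a.2.2, rfl⟩
  have he : Function.Surjective e := by
    rintro ⟨_, σ, f, hf, rfl⟩
    exact ⟨(σ, ⟨f, hf⟩), rfl⟩
  rw [setOf_exists_mem_eq_range lam G, setOf_exists_mem_eq_range ρ G]
  exact Equiv.Perm.isLewinDual_range_of_left_of_right he
    (fun a b => Subtype.ext (hlam _ _ a.2.2 _ _ b.2.2 _ rfl))
    (fun a b => Subtype.ext (hρ _ _ a.2.2 _ _ b.2.2 _ rfl))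

/-- With `λ(νh)(σg·X) = (νh)σg·X = (νσ)(hf)·X` the image of the action of
the internal direct product `ΣnG` on the orbit `ΣnGX`, and `ρ(νh)(σg·X) = σg(νh)⁻¹·X`,
the groups `λ(ΣnG)` and `ρ(ΣnG)` are dual in `Sym(ΣnGX)`: both act simply transitively
on `ΣnGX` and each is the centralizer of the other. -/
theorem stmt16 {n : ℕ} (X : Fin n → ZMod 12) (hX : Function.Injective X)
    (G : Subgroup (Equiv.Perm (ZMod 12)))
    (hGaff : ∀ f ∈ G, ∃ a b : ZMod 12, IsUnit a ∧ ∀ x : ZMod 12, f x = a * x + b)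
    (hGsym : ∀ f ∈ G, f ≠ 1 → (⇑f) '' Set.range X ≠ Set.range X)
    (lam ρ : Equiv.Perm (Fin n) → Equiv.Perm (ZMod 12) → Equiv.Perm ↥(bigOrbit X G))
    (hlam : ∀ (ν : Equiv.Perm (Fin n)) (h : Equiv.Perm (ZMod 12)), h ∈ G →
      ∀ (σ : Equiv.Perm (Fin n)) (f : Equiv.Perm (ZMod 12)), f ∈ G →
      ∀ Y : ↥(bigOrbit X G), (Y : Fin n → ZMod 12) = pact σ (gact f X) →
        ((lam ν h Y : Fin n → ZMod 12) = pact (ν * σ) (gact (h * f) X)))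
    (hρ : ∀ (ν : Equiv.Perm (Fin n)) (h : Equiv.Perm (ZMod 12)), h ∈ G →
      ∀ (σ : Equiv.Perm (Fin n)) (f : Equiv.Perm (ZMod 12)), f ∈ G →
      ∀ Y : ↥(bigOrbit X G), (Y : Fin n → ZMod 12) = pact σ (gact f X) →
        ((ρ ν h Y : Fin n → ZMod 12) = pact (σ * ν⁻¹) (gact (f * h⁻¹) X))) :
    (∀ Y Z : ↥(bigOrbit X G), ∃! p : Equiv.Perm ↥(bigOrbit X G),
        p ∈ {p | ∃ ν : Equiv.Perm (Fin n), ∃ h ∈ G, p = lam ν h} ∧ p Y = Z) ∧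
    (∀ Y Z : ↥(bigOrbit X G), ∃! p : Equiv.Perm ↥(bigOrbit X G),
        p ∈ {p | ∃ ν : Equiv.Perm (Fin n), ∃ h ∈ G, p = ρ ν h} ∧ p Y = Z) ∧
    ((Subgroup.centralizer {p : Equiv.Perm ↥(bigOrbit X G) |
          ∃ ν : Equiv.Perm (Fin n), ∃ h ∈ G, p = lam ν h} : Set (Equiv.Perm ↥(bigOrbit X G)))
        = {p | ∃ ν : Equiv.Perm (Fin n), ∃ h ∈ G, p = ρ ν h}) ∧
    ((Subgroup.centralizer {p : Equiv.Perm ↥(bigOrbit X G) |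
          ∃ ν : Equiv.Perm (Fin n), ∃ h ∈ G, p = ρ ν h} : Set (Equiv.Perm ↥(bigOrbit X G)))
        = {p | ∃ ν : Equiv.Perm (Fin n), ∃ h ∈ G, p = lam ν h}) :=
  stmt16_general X G lam ρ hlam hρ
end

section
/- Let S be the set of 24 triples in (ℤ/12ℤ)³ of the form T_j(0,4,7) and I_j(0,4,7) for j ∈ ℤ/12ℤ, where T_j and I_j act componentwise. Define P, L, R : S → S by P(y1,y2,y3) = I_{y1+y3}(y1,y2,y3), L(y1,y2,y3) = I_{y2+y3}(y1,y2,y3), R(y1,y2,y3) = I_{y1+y2}(y1,y2,y3). Then the subgroup of Sym(S) generated by P, L, R (the PLR-group) and the image of the T/I-group in Sym(S) are dual groups: both act simply transitively on S and each is the centralizer of the other in Sym(S). -/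
/-- The set `S` of the 24 consonant-triad pitch-class segments: all componentwise
transpositions `T_j(0,4,7)` and inversions `I_j(0,4,7)`, where `T_j(k) = k + j` and
`I_j(k) = -k + j`. -/
def consSet : Set (Fin 3 → ZMod 12) :=
  {Y | (∃ j : ZMod 12, Y = fun i => ![0, 4, 7] i + j) ∨
       (∃ j : ZMod 12, Y = fun i => -(![0, 4, 7] i) + j)}

/-!
Two transitive sets of permutations of `S` that commute elementwise are automatically dual: a
permutation commuting with a transitive set is determined by the image of a single point, so
each group acts freely, and any element of the centralizer of one of them agrees at a point with
an element of the other, hence equals it. It therefore suffices to check that `P`, `L`, `R`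
commute with every `T_j` and `I_j` (a direct computation) and that both groups are transitive;
for the PLR-group, `L * R` sends `T_a(0,4,7)` to `T_{a+5}(0,4,7)`, and `5` generates `ℤ/12ℤ`.
-/

section DualGroups

variable {α : Type*} {A B : Set (Equiv.Perm α)}

theorem Equiv.Perm.eq_of_mem_centralizer_of_apply_eq (hA : ∀ x y, ∃ a ∈ A, a x = y)
    {c d : Equiv.Perm α} (hc : c ∈ Subgroup.centralizer A) (hd : d ∈ Subgroup.centralizer A)
    {x : α} (hcd : c x = d x) : c = d := by
  ext y
  obtain ⟨a, ha, rfl⟩ := hA x y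
  have hca : c (a x) = a (c x) := congrArg (· x) (Subgroup.mem_centralizer_iff.mp hc a ha).symm
  have hda : d (a x) = a (d x) := congrArg (· x) (Subgroup.mem_centralizer_iff.mp hd a ha).symm
  rw [hca, hda, hcd]

theorem Equiv.Perm.mem_centralizer_of_commute (hAB : ∀ a ∈ A, ∀ b ∈ B, Commute a b)
    {b : Equiv.Perm α} (hb : b ∈ B) : b ∈ Subgroup.centralizer A :=
  Subgroup.mem_centralizer_iff.mpr fun a ha => hAB a ha b hb

theorem Equiv.Perm.existsUnique_apply_eq_of_commute (hA : ∀ x y, ∃ a ∈ A, a x = y)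
    (hB : ∀ x y, ∃ b ∈ B, b x = y) (hAB : ∀ a ∈ A, ∀ b ∈ B, Commute a b) (x y : α) :
    ∃! b, b ∈ B ∧ b x = y := by
  obtain ⟨b, hb, hbx⟩ := hB x y
  refine ⟨b, ⟨hb, hbx⟩, fun b' ⟨hb', hb'x⟩ => ?_⟩
  exact eq_of_mem_centralizer_of_apply_eq hA (mem_centralizer_of_commute hAB hb')
    (mem_centralizer_of_commute hAB hb) (hb'x.trans hbx.symm)

theorem Equiv.Perm.coe_centralizer_eq_of_commute [Nonempty α] (hA : ∀ x y, ∃ a ∈ A, a x = y)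
    (hB : ∀ x y, ∃ b ∈ B, b x = y) (hAB : ∀ a ∈ A, ∀ b ∈ B, Commute a b) :
    (Subgroup.centralizer A : Set (Equiv.Perm α)) = B := by
  refine Set.Subset.antisymm (fun c hc => ?_) (fun b hb => mem_centralizer_of_commute hAB hb)
  obtain ⟨x⟩ := ‹Nonempty α›
  obtain ⟨b, hb, hbx⟩ := hB x (c x)
  rwa [eq_of_mem_centralizer_of_apply_eq hA hc (mem_centralizer_of_commute hAB hb) hbx.symm]

theorem Subgroup.exists_apply_eq_of_exists_apply_eq (H : Subgroup (Equiv.Perm α)) {x₀ : α}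
    (h : ∀ y, ∃ g ∈ H, g x₀ = y) (x y : α) : ∃ g ∈ H, g x = y := by
  obtain ⟨g, hg, rfl⟩ := h x
  obtain ⟨g', hg', rfl⟩ := h y
  exact ⟨g' * g⁻¹, H.mul_mem hg' (H.inv_mem hg), by simp⟩

end DualGroups

namespace consSet

theorem add_mem {Y : Fin 3 → ZMod 12} (hY : Y ∈ consSet) (j : ZMod 12) :
    (fun i => Y i + j) ∈ consSet := by
  rcases hY with ⟨k, rfl⟩ | ⟨k, rfl⟩
  · exact Or.inl ⟨k + j, by funext i; ring⟩
  · exact Or.inr ⟨k + j, by funext i; ring⟩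

theorem neg_add_mem {Y : Fin 3 → ZMod 12} (hY : Y ∈ consSet) (j : ZMod 12) :
    (fun i => -Y i + j) ∈ consSet := by
  rcases hY with ⟨k, rfl⟩ | ⟨k, rfl⟩
  · exact Or.inr ⟨j - k, by funext i; ring⟩
  · exact Or.inl ⟨j - k, by funext i; ring⟩

def major (j : ZMod 12) : consSet := ⟨fun i => ![0, 4, 7] i + j, Or.inl ⟨j, rfl⟩⟩

def minor (j : ZMod 12) : consSet := ⟨fun i => -(![0, 4, 7] i) + j, Or.inr ⟨j, rfl⟩⟩

instance : Nonempty consSet := ⟨major 0⟩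

theorem major_or_minor (Y : consSet) : (∃ j, Y = major j) ∨ ∃ j, Y = minor j := by
  rcases Y with ⟨Y, ⟨j, rfl⟩ | ⟨j, rfl⟩⟩
  exacts [Or.inl ⟨j, rfl⟩, Or.inr ⟨j, rfl⟩]

def transpose (j : ZMod 12) : Equiv.Perm consSet where
  toFun Y := ⟨fun i => (Y : Fin 3 → ZMod 12) i + j, add_mem Y.2 j⟩
  invFun Y := ⟨fun i => (Y : Fin 3 → ZMod 12) i + -j, add_mem Y.2 (-j)⟩
  left_inv Y := Subtype.ext (by funext i; dsimp; ring)
  right_inv Y := Subtype.ext (by funext i; dsimp; ring)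

def invert (j : ZMod 12) : Equiv.Perm consSet :=
  Function.Involutive.toPerm
    (fun Y => ⟨fun i => -(Y : Fin 3 → ZMod 12) i + j, neg_add_mem Y.2 j⟩)
    fun Y => Subtype.ext (by funext i; simp)

theorem transpose_major (j a : ZMod 12) : transpose j (major a) = major (a + j) :=
  Subtype.ext (by funext i; simp only [transpose, major, Equiv.coe_fn_mk]; ring)

theorem transpose_minor (j a : ZMod 12) : transpose j (minor a) = minor (a + j) :=
  Subtype.ext (by funext i; simp only [transpose, minor, Equiv.coe_fn_mk]; ring)

theorem invert_major (j a : ZMod 12) : invert j (major a) = minor (j - a) :=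
  Subtype.ext (by funext i; show -(![0, 4, 7] i + a) + j = -(![0, 4, 7] i) + (j - a); ring)

theorem invert_minor (j a : ZMod 12) : invert j (minor a) = major (j - a) :=
  Subtype.ext (by funext i; show -(-(![0, 4, 7] i) + a) + j = ![0, 4, 7] i + (j - a); ring)

def tiSet : Set (Equiv.Perm consSet) :=
  {p | (∃ j : ZMod 12, ∀ W : consSet,
          (p W : Fin 3 → ZMod 12) = fun i => (W : Fin 3 → ZMod 12) i + j) ∨
       (∃ j : ZMod 12, ∀ W : consSet,
          (p W : Fin 3 → ZMod 12) = fun i => -((W : Fin 3 → ZMod 12) i) + j)}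

theorem transpose_mem_tiSet (j : ZMod 12) : transpose j ∈ tiSet := Or.inl ⟨j, fun _ => rfl⟩

theorem invert_mem_tiSet (j : ZMod 12) : invert j ∈ tiSet := Or.inr ⟨j, fun _ => rfl⟩

theorem tiSet_exists_apply_eq (Y Z : consSet) : ∃ p ∈ tiSet, p Y = Z := by
  rcases major_or_minor Y with ⟨a, rfl⟩ | ⟨a, rfl⟩ <;>
    rcases major_or_minor Z with ⟨b, rfl⟩ | ⟨b, rfl⟩
  · exact ⟨transpose (b - a), transpose_mem_tiSet _, by rw [transpose_major, add_sub_cancel]⟩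
  · exact ⟨invert (b + a), invert_mem_tiSet _, by rw [invert_major, add_sub_cancel_right]⟩
  · exact ⟨invert (b + a), invert_mem_tiSet _, by rw [invert_minor, add_sub_cancel_right]⟩
  · exact ⟨transpose (b - a), transpose_mem_tiSet _, by rw [transpose_minor, add_sub_cancel]⟩

def IsContextualInversion (a b : Fin 3) (c : Equiv.Perm consSet) : Prop :=
  ∀ Y : consSet, (c Y : Fin 3 → ZMod 12) =
    fun i => -((Y : Fin 3 → ZMod 12) i) + ((Y : Fin 3 → ZMod 12) a + (Y : Fin 3 → ZMod 12) b)

section ContextualInversion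

variable {a b : Fin 3} {c : Equiv.Perm consSet}

theorem IsContextualInversion.commute_of_mem_tiSet (hc : IsContextualInversion a b c)
    {p : Equiv.Perm consSet} (hp : p ∈ tiSet) : Commute c p := by
  rcases hp with ⟨j, hj⟩ | ⟨j, hj⟩ <;>
  · ext W i
    show (c (p W) : Fin 3 → ZMod 12) i = (p (c W) : Fin 3 → ZMod 12) i
    rw [hc, hj, hj, hc]
    ring

theorem IsContextualInversion.apply_major (hc : IsContextualInversion a b c) (x : ZMod 12) :
    c (major x) = minor (x + (![0, 4, 7] a + ![0, 4, 7] b)) :=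
  Subtype.ext (by rw [hc]; funext i; simp only [major, minor]; ring)

theorem IsContextualInversion.apply_minor (hc : IsContextualInversion a b c) (x : ZMod 12) :
    c (minor x) = major (x - (![0, 4, 7] a + ![0, 4, 7] b)) :=
  Subtype.ext (by rw [hc]; funext i; simp only [major, minor]; ring)

end ContextualInversion

section PLR

variable {P L R : Equiv.Perm consSet}

theorem closure_le_centralizer_tiSet (hP : IsContextualInversion 0 2 P)
    (hL : IsContextualInversion 1 2 L) (hR : IsContextualInversion 0 1 R) :
    Subgroup.closure {P, L, R} ≤ Subgroup.centralizer tiSet := by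
  rw [Subgroup.closure_le]
  rintro c (rfl | rfl | rfl) <;> refine Subgroup.mem_centralizer_iff.mpr fun p hp => ?_
  exacts [(hP.commute_of_mem_tiSet hp).eq.symm, (hL.commute_of_mem_tiSet hp).eq.symm,
    (hR.commute_of_mem_tiSet hp).eq.symm]

theorem mul_apply_major (hL : IsContextualInversion 1 2 L) (hR : IsContextualInversion 0 1 R)
    (x : ZMod 12) : (L * R) (major x) = major (x + 5) := by
  rw [Equiv.Perm.mul_apply, hR.apply_major, hL.apply_minor]
  congr 1
  simp only [Matrix.cons_val]
  linear_combination (-1 : ZMod 12) * ZMod.natCast_self 12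

theorem mul_pow_apply_major (hL : IsContextualInversion 1 2 L) (hR : IsContextualInversion 0 1 R)
    (n : ℕ) (x : ZMod 12) : ((L * R) ^ n) (major x) = major (x + 5 * n) := by
  induction n with
  | zero => simp
  | succ n ih =>
    rw [pow_succ', Equiv.Perm.mul_apply, ih, mul_apply_major hL hR]
    push_cast
    ring_nf

theorem closure_exists_apply_eq (hL : IsContextualInversion 1 2 L)
    (hR : IsContextualInversion 0 1 R) (Y Z : consSet) :
    ∃ g ∈ Subgroup.closure {P, L, R}, g Y = Z := by
  have hLmem : L ∈ Subgroup.closure {P, L, R} := Subgroup.subset_closure (by simp)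
  have hRmem : R ∈ Subgroup.closure {P, L, R} := Subgroup.subset_closure (by simp)
  -- `5 * 5 = 1` in `ℤ/12ℤ`
  have hmajor (a : ZMod 12) : ((L * R) ^ (5 * a).val) (major 0) = major a := by
    rw [mul_pow_apply_major hL hR, ZMod.natCast_zmod_val, zero_add, ← mul_assoc]
    congr 1
    linear_combination (2 * a) * ZMod.natCast_self 12
  refine Subgroup.exists_apply_eq_of_exists_apply_eq _ (x₀ := major 0) (fun W => ?_) Y Z
  rcases major_or_minor W with ⟨a, rfl⟩ | ⟨a, rfl⟩
  · exact ⟨_, pow_mem (mul_mem hLmem hRmem) _, hmajor a⟩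
  · refine ⟨R * (L * R) ^ (5 * (a - 4)).val,
      mul_mem hRmem (pow_mem (mul_mem hLmem hRmem) _), ?_⟩
    rw [Equiv.Perm.mul_apply, hmajor, hR.apply_major]
    congr 1
    simp only [Matrix.cons_val]
    ring

end PLR

end consSet

/-- Let `P, L, R : S → S` be the contextual inversions
`P(y) = I_{y1+y3}(y)`, `L(y) = I_{y2+y3}(y)`, `R(y) = I_{y1+y2}(y)` on the set `S` of all
transposed and inverted forms of `(0,4,7)`.  Then the subgroup of `Sym(S)` generated by
`P, L, R` and the image of the `T/I`-group in `Sym(S)` are dual groups: both act simply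
transitively on `S` and each is the centralizer of the other. -/
theorem stmt17 (P L R : Equiv.Perm ↥consSet)
    (hP : ∀ Y : ↥consSet, (P Y : Fin 3 → ZMod 12) =
      fun i => -((Y : Fin 3 → ZMod 12) i) + ((Y : Fin 3 → ZMod 12) 0 + (Y : Fin 3 → ZMod 12) 2))
    (hL : ∀ Y : ↥consSet, (L Y : Fin 3 → ZMod 12) =
      fun i => -((Y : Fin 3 → ZMod 12) i) + ((Y : Fin 3 → ZMod 12) 1 + (Y : Fin 3 → ZMod 12) 2))
    (hR : ∀ Y : ↥consSet, (R Y : Fin 3 → ZMod 12) =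
      fun i => -((Y : Fin 3 → ZMod 12) i) + ((Y : Fin 3 → ZMod 12) 0 + (Y : Fin 3 → ZMod 12) 1)) :
    (∀ Y Z : ↥consSet, ∃! p : Equiv.Perm ↥consSet,
        p ∈ Subgroup.closure {P, L, R} ∧ p Y = Z) ∧
    (∀ Y Z : ↥consSet, ∃! p : Equiv.Perm ↥consSet,
        p ∈ {p : Equiv.Perm ↥consSet |
              (∃ j : ZMod 12, ∀ W : ↥consSet,
                (p W : Fin 3 → ZMod 12) = fun i => (W : Fin 3 → ZMod 12) i + j) ∨
              (∃ j : ZMod 12, ∀ W : ↥consSet,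
                (p W : Fin 3 → ZMod 12) = fun i => -((W : Fin 3 → ZMod 12) i) + j)} ∧
          p Y = Z) ∧
    ((Subgroup.centralizer ((Subgroup.closure {P, L, R} : Subgroup (Equiv.Perm ↥consSet)) :
          Set (Equiv.Perm ↥consSet)) : Set (Equiv.Perm ↥consSet))
        = {p : Equiv.Perm ↥consSet |
            (∃ j : ZMod 12, ∀ W : ↥consSet,
              (p W : Fin 3 → ZMod 12) = fun i => (W : Fin 3 → ZMod 12) i + j) ∨
            (∃ j : ZMod 12, ∀ W : ↥consSet,
              (p W : Fin 3 → ZMod 12) = fun i => -((W : Fin 3 → ZMod 12) i) + j)}) ∧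
    ((Subgroup.centralizer {p : Equiv.Perm ↥consSet |
            (∃ j : ZMod 12, ∀ W : ↥consSet,
              (p W : Fin 3 → ZMod 12) = fun i => (W : Fin 3 → ZMod 12) i + j) ∨
            (∃ j : ZMod 12, ∀ W : ↥consSet,
              (p W : Fin 3 → ZMod 12) = fun i => -((W : Fin 3 → ZMod 12) i) + j)} :
          Set (Equiv.Perm ↥consSet))
        = ((Subgroup.closure {P, L, R} : Subgroup (Equiv.Perm ↥consSet)) :
            Set (Equiv.Perm ↥consSet))) := by
  have hPLR := consSet.closure_exists_apply_eq (P := P) hL hR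
  have hTI := consSet.tiSet_exists_apply_eq
  have hcomm : ∀ g ∈ (Subgroup.closure {P, L, R} : Set (Equiv.Perm consSet)),
      ∀ p ∈ consSet.tiSet, Commute g p := fun g hg p hp =>
    (Subgroup.mem_centralizer_iff.mp (consSet.closure_le_centralizer_tiSet hP hL hR hg) p hp).symm
  have hcomm' : ∀ p ∈ consSet.tiSet,
      ∀ g ∈ (Subgroup.closure {P, L, R} : Set (Equiv.Perm consSet)), Commute p g :=
    fun p hp g hg => (hcomm g hg p hp).symm
  exact ⟨Equiv.Perm.existsUnique_apply_eq_of_commute hTI hPLR hcomm',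
    Equiv.Perm.existsUnique_apply_eq_of_commute hPLR hTI hcomm,
    Equiv.Perm.coe_centralizer_eq_of_commute hPLR hTI hcomm,
    Equiv.Perm.coe_centralizer_eq_of_commute hTI hPLR hcomm'⟩
end
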